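/- arXiv:2604.15599 — 2 statements merged into one kernel-verified Lean document; each statement's English description precedes it below -/
import Mathlib

section
/- Under the limiting joint distribution of Motzkin paths with joint PGF M_p(u,v) = v/(u+v-3)^2, the sum DEG + UNP has PGF M_p(u,u) = u/(2u-3)^2, which equals the PGF of 1 + NB(2,1/3); hence CHN = DEG + UNP - 1 is distributed NB(2,1/3) with mean 4 and variance 12. -/
open Filter Topology

/-- A Motzkin word: steps in `{1, 0, -1}` (up, horizontal, down), total sum 0,
and every prefix has nonnegative sum. -/
def IsMotzkinWord (l : List ℤ) : Prop :=
  (∀ s ∈ l, s = 1 ∨ s = 0 ∨ s = -1) ∧ l.sum = 0 ∧ ∀ p ∈ l.inits, 0 ≤ p.sum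

/-- Number of horizontal steps at height 0. -/
def motzkinFlats (l : List ℤ) : ℕ :=
  (List.range l.length).countP (fun i => decide ((l.take i).sum = 0 ∧ l.getD i 0 = 0))

/-- Number of mountains: returns to the x-axis via a down step. -/
def motzkinMountains (l : List ℤ) : ℕ :=
  (List.range l.length).countP (fun i => decide ((l.take (i + 1)).sum = 0 ∧ l.getD i 0 = -1))

/-- Number of Motzkin paths of length `n` with `i` horizontal steps at height 0
and `j` mountains. -/
noncomputable def motzkinCount (n i j : ℕ) : ℕ :=
  Nat.card {l : List ℤ //
    l.length = n ∧ IsMotzkinWord l ∧ motzkinFlats l = i ∧ motzkinMountains l = j}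

/-- The Motzkin number: number of Motzkin paths of length `n`. -/
noncomputable def motzkinTotal (n : ℕ) : ℕ :=
  Nat.card {l : List ℤ // l.length = n ∧ IsMotzkinWord l}

/-- Limiting joint probability that a uniform Motzkin path has `i` horizontal
steps at height 0 and `j` mountains. -/
noncomputable def motzkinLimit (i j : ℕ) : ℝ :=
  (Nat.choose (i + j - 1) i : ℝ) * ((i : ℝ) + (j : ℝ)) / 3 ^ (i + j + 1)

/-!
Along each antidiagonal `i + j = n + 1` the limiting weights are `C(n, i) (n + 1) / 3 ^ (n + 2)`,
so `∑ᵢ C(n, i) = 2 ^ n` gives `P(DEG + UNP = n + 1) = (n + 1) (1/3)² (2/3)ⁿ`, the law of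
`NB(2, 1/3)`. Since the weights are nonnegative, the double series may be regrouped along
antidiagonals. The PGF, mean and variance of `NB(2, 1 - q)` come from writing polynomials in `n`
in the basis `(n + 1) ⋯ (n + k) = k! C(n + k, k)`, whose geometric series sum to `k! / (1 - q)^(k+1)`.
-/

open Finset Nat

theorem hasSum_ascFactorial_mul_geometric {𝕜 : Type*} [NormedDivisionRing 𝕜]
    [HasSummableGeomSeries 𝕜] (k : ℕ) {r : 𝕜} (hr : ‖r‖ < 1) :
    HasSum (fun n : ℕ => ((n + 1).ascFactorial k : 𝕜) * r ^ n) (k ! / (1 - r) ^ (k + 1)) := by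
  simpa [ascFactorial_eq_factorial_mul_choose, mul_assoc, div_eq_mul_inv] using
    (hasSum_choose_mul_geometric_of_norm_lt_one k hr).mul_left (k ! : 𝕜)

theorem sum_antidiagonal_mul_comp_add {R : Type*} [NonUnitalNonAssocSemiring R] (k : ℕ)
    (w : ℕ × ℕ → R) (g : ℕ → R) :
    ∑ p ∈ antidiagonal k, w p * g (p.1 + p.2) = (∑ p ∈ antidiagonal k, w p) * g k := by
  rw [sum_mul]
  exact sum_congr rfl fun p hp => by rw [mem_antidiagonal.mp hp]

theorem hasSum_mul_comp_add_of_hasSum_sum_antidiagonal {w : ℕ × ℕ → ℝ} (hw : ∀ p, 0 ≤ w p)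
    {g : ℕ → ℝ} {S : ℝ} (h : HasSum (fun k => (∑ p ∈ antidiagonal k, w p) * g k) S) :
    HasSum (fun p : ℕ × ℕ => w p * g (p.1 + p.2)) S := by
  have hF : Summable fun p : ℕ × ℕ => w p * g (p.1 + p.2) := by
    rw [← summable_abs_iff, ← HasAntidiagonal.sigmaAntidiagonalEquivProd.summable_iff,
      Function.comp_def, summable_sigma_of_nonneg fun _ => abs_nonneg _]
    refine ⟨fun k => (hasSum_fintype _).summable, ?_⟩
    refine (summable_abs_iff.mpr h.summable).congr fun k => ?_
    simp only [HasAntidiagonal.sigmaAntidiagonalEquivProd_apply, tsum_fintype, abs_mul,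
      abs_of_nonneg (hw _), abs_of_nonneg (sum_nonneg fun p _ => hw p)]
    rw [sum_coe_sort (antidiagonal k) fun p => w p * |g (p.1 + p.2)|]
    exact (sum_antidiagonal_mul_comp_add k w fun n => |g n|).symm
  have hsigma := (HasAntidiagonal.sigmaAntidiagonalEquivProd.hasSum_iff.mpr hF.hasSum).sigma
    fun k => hasSum_fintype _
  simp only [Function.comp_apply, HasAntidiagonal.sigmaAntidiagonalEquivProd_apply,
    sum_coe_sort (antidiagonal _) fun p => w p * g (p.1 + p.2),
    sum_antidiagonal_mul_comp_add] at hsigma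
  exact h.unique hsigma ▸ hF.hasSum

/-- The law of `NB(2, 1 - q)`: `n` failures, each of probability `q`, before the second success. -/
noncomputable def negBinomTwo (q : ℝ) (n : ℕ) : ℝ := (n + 1) * (1 - q) ^ 2 * q ^ n

section negBinomTwo

variable {q : ℝ}

theorem hasSum_negBinomTwo_mul_pow {u : ℝ} (h : ‖q * u‖ < 1) :
    HasSum (fun n => negBinomTwo q n * u ^ n) (((1 - q) / (1 - q * u)) ^ 2) := by
  have key := (hasSum_ascFactorial_mul_geometric 1 h).mul_left ((1 - q) ^ 2)
  rw [factorial_one, cast_one, ← div_eq_mul_one_div, ← div_pow] at key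
  refine key.congr_fun fun n => ?_
  simp only [negBinomTwo, ascFactorial_succ, ascFactorial_zero]
  push_cast
  ring

theorem hasSum_mul_negBinomTwo (hq : |q| < 1) :
    HasSum (fun n : ℕ => (n : ℝ) * negBinomTwo q n) (2 * q / (1 - q)) := by
  have hq' : ‖q‖ < 1 := hq
  have hq1 : 1 - q ≠ 0 := by linarith [(abs_lt.mp hq).2]
  have key := (((hasSum_ascFactorial_mul_geometric 2 hq').sub
    ((hasSum_ascFactorial_mul_geometric 1 hq').mul_left 2)).mul_left ((1 - q) ^ 2))
  -- the sum is left open here and fixed by unifying with `key`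
  rw [show 2 * q / (1 - q) = _ from ?value]
  · refine key.congr_fun fun n => ?_
    simp only [negBinomTwo, ascFactorial_succ, ascFactorial_zero]
    push_cast
    ring
  · simp only [factorial]
    field_simp
    ring

theorem hasSum_sq_sub_mul_negBinomTwo (hq : |q| < 1) :
    HasSum (fun n : ℕ => ((n : ℝ) - 2 * q / (1 - q)) ^ 2 * negBinomTwo q n)
      (2 * q / (1 - q) ^ 2) := by
  have hq' : ‖q‖ < 1 := hq
  have hq1 : 1 - q ≠ 0 := by linarith [(abs_lt.mp hq).2]
  set μ := 2 * q / (1 - q) with hμ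
  -- `(n - μ) ^ 2 (n + 1) = (n + 1)(n + 2)(n + 3) - (5 + 2μ)(n + 1)(n + 2) + (μ + 2) ^ 2 (n + 1)`
  have key := (((hasSum_ascFactorial_mul_geometric 3 hq').sub
    ((hasSum_ascFactorial_mul_geometric 2 hq').mul_left (5 + 2 * μ))).add
    ((hasSum_ascFactorial_mul_geometric 1 hq').mul_left ((μ + 2) ^ 2))).mul_left ((1 - q) ^ 2)
  rw [show 2 * q / (1 - q) ^ 2 = _ from ?value]
  · refine key.congr_fun fun n => ?_
    simp only [negBinomTwo, ascFactorial_succ, ascFactorial_zero]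
    push_cast
    ring
  · simp only [hμ, factorial]
    field_simp
    ring

end negBinomTwo

theorem motzkinLimit_nonneg (i j : ℕ) : 0 ≤ motzkinLimit i j := by
  unfold motzkinLimit
  positivity

theorem motzkinLimit_of_add_eq_succ {i j n : ℕ} (h : i + j = n + 1) :
    motzkinLimit i j = n.choose i * (n + 1) / 3 ^ (n + 2) := by
  have h' : (i : ℝ) + j = n + 1 := by exact_mod_cast h
  rw [motzkinLimit, h, h', Nat.add_sub_cancel]

theorem sum_antidiagonal_succ_motzkinLimit (n : ℕ) :
    ∑ p ∈ antidiagonal (n + 1), motzkinLimit p.1 p.2 = negBinomTwo (2 / 3) n := by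
  have hchoose : ∑ p ∈ antidiagonal (n + 1), (n.choose p.1 : ℝ) = 2 ^ n := by
    rw [Nat.sum_antidiagonal_eq_sum_range_succ (fun i _ => (n.choose i : ℝ)), sum_range_succ,
      choose_succ_self, cast_zero, add_zero, ← cast_sum, sum_range_choose, cast_pow, cast_ofNat]
  rw [sum_congr rfl fun p hp => motzkinLimit_of_add_eq_succ (mem_antidiagonal.mp hp),
    ← sum_div, ← sum_mul, hchoose, negBinomTwo, div_pow]
  field_simp
  ring

theorem hasSum_motzkinLimit_mul_comp_add {g : ℕ → ℝ} {S : ℝ}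
    (h : HasSum (fun n => negBinomTwo (2 / 3) n * g (n + 1)) S) :
    HasSum (fun p : ℕ × ℕ => motzkinLimit p.1 p.2 * g (p.1 + p.2)) S := by
  refine hasSum_mul_comp_add_of_hasSum_sum_antidiagonal (fun p => motzkinLimit_nonneg p.1 p.2)
    ((hasSum_nat_add_iff' 1).mp ?_)
  have h0 : motzkinLimit 0 0 = 0 := by simp [motzkinLimit]
  simpa [sum_antidiagonal_succ_motzkinLimit, h0] using h

/-- Under the limiting joint PGF `v/(u+v-3)^2` for Motzkin paths, the sum
`DEG + UNP` has PGF `u/(2u-3)^2`, the PGF of `1 + NB(2,1/3)`; hence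
`CHN = DEG + UNP - 1 ~ NB(2,1/3)` with mean 4 and variance 12. -/
theorem stmt8 :
    (∀ u : ℝ, |u| < 3 / 2 →
      HasSum (fun p : ℕ × ℕ => motzkinLimit p.1 p.2 * u ^ (p.1 + p.2))
        (u / (2 * u - 3) ^ 2)) ∧
    (∀ u : ℝ, |u| < 3 / 2 →
      u / (2 * u - 3) ^ 2 = u * ((1 / 3) / (1 - (2 / 3) * u)) ^ 2) ∧
    (∑' p : ℕ × ℕ, (((p.1 : ℝ) + (p.2 : ℝ)) - 1) * motzkinLimit p.1 p.2) = 4 ∧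
    (∑' p : ℕ × ℕ, ((((p.1 : ℝ) + (p.2 : ℝ)) - 1) - 4) ^ 2 * motzkinLimit p.1 p.2)
      = 12 := by
  have hq : |(2 / 3 : ℝ)| < 1 := by norm_num [abs_of_pos]
  have hmean : HasSum (fun n : ℕ => (n : ℝ) * negBinomTwo (2 / 3) n) 4 := by
    convert hasSum_mul_negBinomTwo hq using 1
    norm_num
  have hvar : HasSum (fun n : ℕ => ((n : ℝ) - 4) ^ 2 * negBinomTwo (2 / 3) n) 12 := by
    convert hasSum_sq_sub_mul_negBinomTwo hq using 4 <;> norm_num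
  have hpgf (u : ℝ) (hu : |u| < 3 / 2) :
      u / (2 * u - 3) ^ 2 = u * ((1 / 3) / (1 - (2 / 3) * u)) ^ 2 := by
    have hu' : 3 - 2 * u ≠ 0 := by linarith [(abs_lt.mp hu).2]
    field_simp
    ring
  refine ⟨fun u hu => ?_, hpgf, ?_, ?_⟩
  · have hqu : ‖2 / 3 * u‖ < 1 := by
      rw [norm_mul, Real.norm_eq_abs, Real.norm_eq_abs, abs_of_pos (by norm_num : (0 : ℝ) < 2 / 3)]
      linarith
    rw [hpgf u hu, show (1 : ℝ) / 3 = 1 - 2 / 3 by norm_num]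
    exact hasSum_motzkinLimit_mul_comp_add
      (((hasSum_negBinomTwo_mul_pow hqu).mul_left u).congr_fun fun n => by ring)
  · refine ((hasSum_motzkinLimit_mul_comp_add (g := fun k => (k : ℝ) - 1)
      (hmean.congr_fun fun n => ?_)).congr_fun fun p => ?_).tsum_eq <;> push_cast <;> ring
  · refine ((hasSum_motzkinLimit_mul_comp_add (g := fun k => ((k : ℝ) - 1 - 4) ^ 2)
      (hvar.congr_fun fun n => ?_)).congr_fun fun p => ?_).tsum_eq <;> push_cast <;> ring
end

section
/- For each fixed k ≥ 1, the proportion of Dyck paths of semilength n whose lowest valley has height k-1 (equivalently, whose first helix has length k, i.e. the first k up-steps are matched with the last k down-steps maximally) converges as n → ∞ to (3/4)·(1/4)^{k-1}. Hence the depth is distributed as 1 + NB(1, 3/4) = 1 + Geometric(3/4), with mean 4/3 and variance 4/9. -/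
open Filter Topology

/-- Height (final) of a Dyck-path prefix given as a list of steps:
`true` = up step, `false` = down step. -/
def dyckHeight (l : List Bool) : ℤ := (l.count true : ℤ) - (l.count false : ℤ)

/-- A Dyck word: ends at height 0 and every prefix has nonnegative height. -/
def IsDyckWord (l : List Bool) : Prop :=
  dyckHeight l = 0 ∧ ∀ p ∈ l.inits, 0 ≤ dyckHeight p

/-- Number of mountains of a Dyck path = number of returns to the x-axis
at a positive position. -/
def dyckMountains (l : List Bool) : ℕ :=
  (List.range (l.length + 1)).countP (fun i => decide (0 < i ∧ dyckHeight (l.take i) = 0))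

/-- Number of Dyck paths of semilength `n` with exactly `k` mountains. -/
noncomputable def dyckCount (n k : ℕ) : ℕ :=
  Nat.card {l : List Bool // l.length = 2 * n ∧ IsDyckWord l ∧ dyckMountains l = k}

/-- The depth (first-helix length) of a Dyck path: the largest `k` such that the
path starts with `k` nested stacked matched pairs around a Dyck word, followed
by a Dyck word. -/
noncomputable def dyckDepth (l : List Bool) : ℕ :=
  sSup {k | ∃ m r : List Bool, IsDyckWord m ∧ IsDyckWord r ∧
    l = List.replicate k true ++ m ++ List.replicate k false ++ r}

/-- Number of Dyck paths of semilength `n` with depth `k`. -/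
noncomputable def dyckDepthCount (n k : ℕ) : ℕ :=
  Nat.card {l : List Bool // l.length = 2 * n ∧ IsDyckWord l ∧ dyckDepth l = k}

/-! A Dyck path has first helix of length at least `k ≥ 1` iff it is `U^k m D^k r` with `m`, `r`
Dyck paths, and this decomposition is unique (peel off the first return `k` times). So those of
semilength `n` correspond to pairs `(m, r)` of total semilength `n - k`, i.e. to Dyck paths `U m D r`
of semilength `n - k + 1`, and exactly `C(n-k+1) - C(n-k)` paths have depth `k`. As
`C(n) / C(n+1) → 1/4`, the proportion tends to `(1/4)^(k-1) - (1/4)^k`. The mean and variance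
are those of `1 + Geometric` with failure probability `q = 1/4`: `1/(1-q)` and `q/(1-q)²`. -/

lemma Nat.sSup_setOf_eq_iff {P : ℕ → Prop} (hP : Antitone P) (h0 : P 0)
    (hbdd : BddAbove {k | P k}) (k : ℕ) : sSup {k | P k} = k ↔ P k ∧ ¬P (k + 1) := by
  constructor
  · rintro rfl
    exact ⟨Nat.sSup_mem ⟨0, h0⟩ hbdd, fun h => (le_csSup hbdd h).not_gt (Nat.lt_succ_self _)⟩
  · rintro ⟨hk, hk'⟩
    refine IsGreatest.csSup_eq ⟨hk, fun j hj => ?_⟩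
    by_contra! hlt
    exact hk' (hP hlt hj)

lemma Nat.card_subtype_and_add_card_subtype_and_not {α : Type*} {A : α → Prop} (B : α → Prop)
    (hA : {x | A x}.Finite) :
    Nat.card {x // A x ∧ B x} + Nat.card {x // A x ∧ ¬B x} = Nat.card {x // A x} := by
  have := Set.ncard_inter_add_ncard_sdiff_eq_ncard {x | A x} {x | B x} hA
  rwa [← Nat.card_coe_set_eq, ← Nat.card_coe_set_eq, ← Nat.card_coe_set_eq] at this

namespace DyckWord

open DyckStep

def HasHelix (k : ℕ) (p : DyckWord) : Prop :=
  ∃ m r : DyckWord, p = nest^[k] m + r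

noncomputable def depth (p : DyckWord) : ℕ :=
  sSup {k | p.HasHelix k}

lemma toList_nest_iterate (k : ℕ) (m : DyckWord) :
    (nest^[k] m).toList = List.replicate k U ++ m.toList ++ List.replicate k D := by
  induction k with
  | zero => simp
  | succ k ih =>
    rw [Function.iterate_succ_apply']
    change [U] ++ (nest^[k] m).toList ++ [D] = _
    rw [ih, List.replicate_succ, List.replicate_succ']
    simp

lemma semilength_nest_iterate (k : ℕ) (m : DyckWord) :
    (nest^[k] m).semilength = m.semilength + k := by
  induction k with
  | zero => simp
  | succ k ih => rw [Function.iterate_succ_apply', semilength_nest, ih, add_assoc]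

lemma nest_injective : Function.Injective nest := fun p q h => by
  rw [← insidePart_nest (p := p), h, insidePart_nest]

lemma hasHelix_zero (p : DyckWord) : p.HasHelix 0 := ⟨0, p, by simp⟩

lemma antitone_hasHelix (p : DyckWord) : Antitone p.HasHelix :=
  antitone_nat_of_succ_le fun k ⟨m, r, h⟩ =>
    ⟨m.nest, r, by rwa [← Function.iterate_succ_apply]⟩

lemma HasHelix.le_semilength {p : DyckWord} {k : ℕ} (h : p.HasHelix k) : k ≤ p.semilength := by
  obtain ⟨m, r, rfl⟩ := h
  rw [semilength_add, semilength_nest_iterate]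
  omega

lemma nest_iterate_add_injective {k : ℕ} (hk : k ≠ 0) :
    Function.Injective fun q : DyckWord × DyckWord => nest^[k] q.1 + q.2 := by
  obtain ⟨j, rfl⟩ := Nat.exists_eq_succ_of_ne_zero hk
  rintro ⟨m, r⟩ ⟨m', r'⟩ h
  simp only [Function.iterate_succ_apply'] at h
  have hin := congrArg insidePart h
  have hout := congrArg outsidePart h
  simp only [insidePart_add nest_ne_zero, outsidePart_add nest_ne_zero, insidePart_nest,
    outsidePart_nest, zero_add] at hin hout
  exact Prod.ext (nest_injective.iterate j hin) hout

lemma depth_eq_iff (p : DyckWord) (k : ℕ) :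
    p.depth = k ↔ p.HasHelix k ∧ ¬p.HasHelix (k + 1) :=
  Nat.sSup_setOf_eq_iff p.antitone_hasHelix p.hasHelix_zero
    ⟨p.semilength, fun _ h => h.le_semilength⟩ k

lemma hasHelix_one_iff {p : DyckWord} : p.HasHelix 1 ↔ p ≠ 0 := by
  refine ⟨?_, fun h => ⟨p.insidePart, p.outsidePart, (nest_insidePart_add_outsidePart h).symm⟩⟩
  rintro ⟨m, r, rfl⟩ h
  exact nest_ne_zero (add_eq_zero'.1 h).1

noncomputable def helixEquiv {k : ℕ} (hk : k ≠ 0) (n : ℕ) :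
    {q : DyckWord × DyckWord // q.1.semilength + q.2.semilength = n} ≃
      {p : DyckWord // p.semilength = n + k ∧ p.HasHelix k} :=
  Equiv.ofBijective
    (fun q => ⟨nest^[k] q.1.1 + q.1.2, by
      rw [semilength_add, semilength_nest_iterate]; have := q.2; omega, q.1.1, q.1.2, rfl⟩)
    ⟨fun q q' h => Subtype.ext (nest_iterate_add_injective hk (congrArg Subtype.val h)),
      fun ⟨p, hp, m, r, hmr⟩ => ⟨⟨(m, r), by
        rw [hmr, semilength_add, semilength_nest_iterate] at hp
        change m.semilength + r.semilength = n
        omega⟩, Subtype.ext hmr.symm⟩⟩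

lemma card_semilength_hasHelix {k : ℕ} (hk : k ≠ 0) (n : ℕ) :
    Nat.card {p : DyckWord // p.semilength = n + k ∧ p.HasHelix k} = catalan (n + 1) := by
  have hnz : ∀ p : DyckWord, p.semilength = n + 1 → p ≠ 0 := by
    rintro p hp rfl
    simp at hp
  rw [← Nat.card_congr (helixEquiv hk n), Nat.card_congr (helixEquiv one_ne_zero n),
    Nat.card_congr (Equiv.subtypeEquivRight fun p => and_iff_left_of_imp fun hp =>
      hasHelix_one_iff.2 (hnz p hp)),
    Nat.card_eq_fintype_card, card_dyckWord_semilength_eq_catalan]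

lemma card_semilength_depth_add_catalan {k : ℕ} (hk : k ≠ 0) (n : ℕ) :
    Nat.card {p : DyckWord // p.semilength = n + k + 1 ∧ p.depth = k} + catalan (n + 1) =
      catalan (n + 2) := by
  have hfin : {p : DyckWord | p.semilength = n + k + 1 ∧ p.HasHelix k}.Finite :=
    (Set.finite_coe_iff.1
      (inferInstance : Finite {p : DyckWord // p.semilength = n + k + 1})).subset fun _ h => h.1
  have hA := card_semilength_hasHelix hk (n + 1)
  have hB := card_semilength_hasHelix k.add_one_ne_zero n
  rw [show n + 1 + k = n + k + 1 by ring] at hA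
  rw [← add_assoc] at hB
  have hB_and : Nat.card {p : DyckWord // (p.semilength = n + k + 1 ∧ p.HasHelix k) ∧
      p.HasHelix (k + 1)} = catalan (n + 1) := by
    rw [← hB]
    exact Nat.card_congr <| Equiv.subtypeEquivRight fun p =>
      ⟨fun h => ⟨h.1.1, h.2⟩, fun h => ⟨⟨h.1, p.antitone_hasHelix k.le_succ h.2⟩, h.2⟩⟩
  simp_rw [depth_eq_iff, ← and_assoc]
  rw [← hA, ← hB_and, add_comm, Nat.card_subtype_and_add_card_subtype_and_not _ hfin]

end DyckWord

section BoolEncoding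

open DyckStep

def stepEquiv : Bool ≃ DyckStep where
  toFun b := if b then U else D
  invFun s := s == U
  left_inv b := by cases b <;> rfl
  right_inv s := by cases s <;> rfl

lemma count_map_stepEquiv (l : List Bool) (b : Bool) :
    (l.map stepEquiv).count (stepEquiv b) = l.count b :=
  List.count_map_of_injective _ _ stepEquiv.injective _

lemma count_map_stepEquiv_symm (l : List DyckStep) (s : DyckStep) :
    (l.map stepEquiv.symm).count (stepEquiv.symm s) = l.count s :=
  List.count_map_of_injective _ _ stepEquiv.symm.injective _

lemma isDyckWord_iff (l : List Bool) : IsDyckWord l ↔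
    l.count true = l.count false ∧ ∀ i, (l.take i).count false ≤ (l.take i).count true := by
  unfold IsDyckWord dyckHeight
  constructor
  · rintro ⟨h0, h1⟩
    refine ⟨by omega, fun i => ?_⟩
    have := h1 _ ((List.mem_inits _ _).2 (List.take_prefix i l))
    omega
  · rintro ⟨h0, h1⟩
    refine ⟨by omega, fun p hp => ?_⟩
    have := h1 p.length
    rw [← List.prefix_iff_eq_take.1 ((List.mem_inits _ _).1 hp)] at this
    omega

def dyckWordEquiv : {l : List Bool // IsDyckWord l} ≃ DyckWord where
  toFun l :=
    { toList := l.1.map stepEquiv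
      count_U_eq_count_D := by
        rw [← stepEquiv.apply_symm_apply U, ← stepEquiv.apply_symm_apply D,
          count_map_stepEquiv, count_map_stepEquiv]
        exact ((isDyckWord_iff _).1 l.2).1
      count_D_le_count_U := fun i => by
        rw [← List.map_take, ← stepEquiv.apply_symm_apply U, ← stepEquiv.apply_symm_apply D,
          count_map_stepEquiv, count_map_stepEquiv]
        exact ((isDyckWord_iff _).1 l.2).2 i }
  invFun p := ⟨p.toList.map stepEquiv.symm, (isDyckWord_iff _).2 <| by
    refine ⟨?_, fun i => ?_⟩
    · rw [← stepEquiv.symm_apply_apply true, ← stepEquiv.symm_apply_apply false,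
        count_map_stepEquiv_symm, count_map_stepEquiv_symm]
      exact p.count_U_eq_count_D
    · rw [← List.map_take, ← stepEquiv.symm_apply_apply true, ← stepEquiv.symm_apply_apply false,
        count_map_stepEquiv_symm, count_map_stepEquiv_symm]
      exact p.count_D_le_count_U i⟩
  left_inv l := Subtype.ext (by simp)
  right_inv p := DyckWord.ext (by simp)

lemma toList_dyckWordEquiv (l : {l : List Bool // IsDyckWord l}) :
    (dyckWordEquiv l).toList = l.1.map stepEquiv := rfl

lemma length_eq_two_mul_semilength_dyckWordEquiv (l : {l : List Bool // IsDyckWord l}) :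
    l.1.length = 2 * (dyckWordEquiv l).semilength := by
  rw [DyckWord.two_mul_semilength_eq_length, toList_dyckWordEquiv, List.length_map]

lemma hasHelix_dyckWordEquiv_iff (l : {l : List Bool // IsDyckWord l}) (k : ℕ) :
    (dyckWordEquiv l).HasHelix k ↔ ∃ m r : List Bool, IsDyckWord m ∧ IsDyckWord r ∧
      l.1 = List.replicate k true ++ m ++ List.replicate k false ++ r := by
  have key : ∀ m r : {l : List Bool // IsDyckWord l},
      dyckWordEquiv l = DyckWord.nest^[k] (dyckWordEquiv m) + dyckWordEquiv r ↔
        l.1 = List.replicate k true ++ m.1 ++ List.replicate k false ++ r.1 := fun m r => by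
    rw [DyckWord.ext_iff, ← (List.map_injective_iff.2 stepEquiv.injective).eq_iff]
    change _ = (DyckWord.nest^[k] _).toList ++ _ ↔ _
    rw [DyckWord.toList_nest_iterate]
    simp only [toList_dyckWordEquiv, List.map_append, List.map_replicate]
    rfl
  constructor
  · rintro ⟨M, R, h⟩
    refine ⟨_, _, (dyckWordEquiv.symm M).2, (dyckWordEquiv.symm R).2, (key _ _).1 ?_⟩
    simpa using h
  · rintro ⟨m, r, hm, hr, h⟩
    exact ⟨_, _, (key ⟨m, hm⟩ ⟨r, hr⟩).2 h⟩

lemma dyckDepth_eq_depth_dyckWordEquiv (l : {l : List Bool // IsDyckWord l}) :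
    dyckDepth l.1 = (dyckWordEquiv l).depth := by
  simp only [dyckDepth, DyckWord.depth, hasHelix_dyckWordEquiv_iff]

lemma dyckDepthCount_eq_card (n k : ℕ) :
    dyckDepthCount n k = Nat.card {p : DyckWord // p.semilength = n ∧ p.depth = k} := by
  refine Nat.card_congr <| (Equiv.subtypeEquivRight fun l => ?_).trans <|
    (Equiv.subtypeSubtypeEquivSubtypeInter _
      fun l => l.length = 2 * n ∧ dyckDepth l = k).symm.trans <|
      dyckWordEquiv.subtypeEquiv fun l => ?_
  · exact (and_left_comm ..)
  · rw [length_eq_two_mul_semilength_dyckWordEquiv, dyckDepth_eq_depth_dyckWordEquiv]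
    omega

end BoolEncoding

lemma tendsto_div_sub_of_tendsto_div_succ {a : ℕ → ℝ} {r : ℝ} (ha : ∀ n, a n ≠ 0)
    (h : Tendsto (fun n => a n / a (n + 1)) atTop (𝓝 r)) (j : ℕ) :
    Tendsto (fun n => a (n - j) / a n) atTop (𝓝 (r ^ j)) := by
  induction j with
  | zero => simp only [Nat.sub_zero, pow_zero, div_self (ha _), tendsto_const_nhds]
  | succ j ih =>
    rw [pow_succ']
    refine ((h.comp (tendsto_sub_atTop_nat (j + 1))).mul ih).congr' ?_
    filter_upwards [eventually_ge_atTop (j + 1)] with n hn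
    rw [Function.comp_apply, show n - (j + 1) + 1 = n - j by omega, div_mul_div_cancel₀ (ha _)]

lemma catalan_pos (n : ℕ) : 0 < catalan n :=
  Nat.pos_of_mul_pos_left ((succ_mul_catalan_eq_centralBinom n).symm ▸ n.centralBinom_pos)

lemma catalan_succ_mul (n : ℕ) : (n + 2) * catalan (n + 1) = 2 * (2 * n + 1) * catalan n := by
  refine Nat.eq_of_mul_eq_mul_left n.succ_pos ?_
  calc (n + 1) * ((n + 2) * catalan (n + 1)) = (n + 1) * (n + 1).centralBinom := by
        rw [← succ_mul_catalan_eq_centralBinom]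
    _ = 2 * (2 * n + 1) * n.centralBinom := n.succ_mul_centralBinom_succ
    _ = (n + 1) * (2 * (2 * n + 1) * catalan n) := by
        rw [← succ_mul_catalan_eq_centralBinom]; ring

lemma tendsto_catalan_div_catalan_succ :
    Tendsto (fun n => (catalan n : ℝ) / catalan (n + 1)) atTop (𝓝 (1 / 4)) := by
  have hden : Tendsto (fun n : ℕ => 8 * (n : ℝ) + 4) atTop atTop :=
    tendsto_atTop_add_const_right _ _ (tendsto_natCast_atTop_atTop.const_mul_atTop (by norm_num))
  have hlim := (hden.inv_tendsto_atTop.const_mul 3).const_add (1 / 4 : ℝ)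
  rw [mul_zero, add_zero] at hlim
  refine hlim.congr fun n => ?_
  change 1 / 4 + 3 * (8 * (n : ℝ) + 4)⁻¹ = _
  have hcast : ((n : ℝ) + 2) * catalan (n + 1) = 2 * (2 * n + 1) * catalan n := by
    exact_mod_cast catalan_succ_mul n
  have hpos : (0 : ℝ) < catalan (n + 1) := by exact_mod_cast catalan_pos _
  field_simp
  linear_combination 8 * hcast

lemma hasSum_mean_one_add_geometric {q : ℝ} (hq : |q| < 1) :
    HasSum (fun m : ℕ => ((m : ℝ) + 1) * ((1 - q) * q ^ m)) (1 / (1 - q)) := by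
  have hq1 : 1 - q ≠ 0 := by linarith [le_abs_self q]
  have h := (hasSum_choose_mul_geometric_of_norm_lt_one 1 (r := q) hq).mul_left (1 - q)
  rw [show (1 - q) * (1 / (1 - q) ^ (1 + 1)) = 1 / (1 - q) by field_simp] at h
  refine h.congr_fun fun m => ?_
  rw [Nat.choose_one_right]
  push_cast
  ring

lemma hasSum_variance_one_add_geometric {q : ℝ} (hq : |q| < 1) :
    HasSum (fun m : ℕ => ((m : ℝ) + 1 - 1 / (1 - q)) ^ 2 * ((1 - q) * q ^ m))
      (q / (1 - q) ^ 2) := by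
  have hq1 : 1 - q ≠ 0 := by linarith [le_abs_self q]
  set μ := 1 / (1 - q) with hμ
  have h2 := (hasSum_choose_mul_geometric_of_norm_lt_one 2 (r := q) hq).mul_left (2 * (1 - q))
  have h1 := (hasSum_mean_one_add_geometric hq).mul_left (1 + 2 * μ)
  have h0 := (hasSum_geometric_of_abs_lt_one hq).mul_left (μ ^ 2 * (1 - q))
  have hval : q / (1 - q) ^ 2 = 2 * (1 - q) * (1 / (1 - q) ^ (2 + 1)) - (1 + 2 * μ) * μ +
      μ ^ 2 * (1 - q) * (1 - q)⁻¹ := by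
    rw [hμ]
    field_simp
    ring
  rw [hval]
  refine ((h2.sub h1).add h0).congr_fun fun m => ?_
  rw [Nat.cast_choose_two]
  push_cast
  ring

lemma tendsto_dyckDepthCount_div_catalan {k : ℕ} (hk : k ≠ 0) :
    Tendsto (fun n => (dyckDepthCount n k : ℝ) / catalan n) atTop
      (𝓝 ((3 / 4) * (1 / 4) ^ (k - 1))) := by
  obtain ⟨j, rfl⟩ := Nat.exists_eq_succ_of_ne_zero hk
  have hcat : ∀ n, (catalan n : ℝ) ≠ 0 := fun n => by exact_mod_cast (catalan_pos n).ne'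
  have h := (tendsto_div_sub_of_tendsto_div_succ hcat tendsto_catalan_div_catalan_succ j).sub
    (tendsto_div_sub_of_tendsto_div_succ hcat tendsto_catalan_div_catalan_succ (j + 1))
  rw [show (1 / 4 : ℝ) ^ j - (1 / 4) ^ (j + 1) = 3 / 4 * (1 / 4) ^ (j + 1 - 1) by
    rw [Nat.add_sub_cancel]; ring] at h
  refine h.congr' ?_
  filter_upwards [eventually_ge_atTop (j + 2)] with n hn
  obtain ⟨N, rfl⟩ : ∃ N, n = N + (j + 1) + 1 := ⟨n - (j + 2), by omega⟩
  have hcount := DyckWord.card_semilength_depth_add_catalan j.succ_ne_zero N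
  rw [← dyckDepthCount_eq_card] at hcount
  rw [← sub_div, show N + (j + 1) + 1 - j = N + 2 by omega,
    show N + (j + 1) + 1 - (j + 1) = N + 1 by omega, ← hcount]
  push_cast
  ring

/-- For fixed `k ≥ 1`, the proportion of Dyck paths of semilength `n` with first
helix of length `k` tends to `(3/4)·(1/4)^(k-1)`; this distribution
(`1 + Geometric(3/4)`) has mean `4/3` and variance `4/9`. -/
theorem stmt13 (k : ℕ) (hk : 1 ≤ k) :
    Tendsto (fun n : ℕ => (dyckDepthCount n k : ℝ) / (catalan n : ℝ)) atTop
      (nhds ((3 / 4) * (1 / 4) ^ (k - 1))) ∧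
    (∑' m : ℕ, ((m : ℝ) + 1) * ((3 / 4) * (1 / 4) ^ m)) = 4 / 3 ∧
    (∑' m : ℕ, (((m : ℝ) + 1) - 4 / 3) ^ 2 * ((3 / 4) * (1 / 4) ^ m)) = 4 / 9 := by
  have hq : |(1 / 4 : ℝ)| < 1 := by norm_num [abs_of_pos]
  refine ⟨tendsto_dyckDepthCount_div_catalan (by omega), ?_, ?_⟩
  · rw [show (3 / 4 : ℝ) = 1 - 1 / 4 by norm_num, (hasSum_mean_one_add_geometric hq).tsum_eq]
    norm_num
  · rw [show (4 / 3 : ℝ) = 1 / (1 - 1 / 4) by norm_num, show (3 / 4 : ℝ) = 1 - 1 / 4 by norm_num,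
      (hasSum_variance_one_add_geometric hq).tsum_eq]
    norm_num
end
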